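/- arXiv:2510.19657 — 3 statements merged into one kernel-verified Lean document; each statement's English description precedes it below -/
import Mathlib

section
/- If a unital linear map Φ : M_d(ℂ) → M_d(ℂ) is 2-positive, then Φ satisfies the Schwarz inequality: Φ(A†A) ≥ Φ(A†)Φ(A) for all A ∈ M_d(ℂ), where ≥ denotes the positive semidefinite (Loewner) order. -/
open Matrix ComplexOrder

/-- The ampliation `Id_k ⊗ Φ` of a linear map `Φ : M_d(ℂ) → M_d(ℂ)`. -/
def ampliation (d k : ℕ)
    (Φ : Matrix (Fin d) (Fin d) ℂ →ₗ[ℂ] Matrix (Fin d) (Fin d) ℂ)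
    (M : Matrix (Fin k × Fin d) (Fin k × Fin d) ℂ) :
    Matrix (Fin k × Fin d) (Fin k × Fin d) ℂ :=
  Matrix.of fun p q => Φ (Matrix.of fun i j => M (p.1, i) (q.1, j)) p.2 q.2

/-- `Φ` is 2-positive if `Id₂ ⊗ Φ` preserves positive semidefiniteness. -/
def twoPositive (d : ℕ)
    (Φ : Matrix (Fin d) (Fin d) ℂ →ₗ[ℂ] Matrix (Fin d) (Fin d) ℂ) : Prop :=
  ∀ M : Matrix (Fin 2 × Fin d) (Fin 2 × Fin d) ℂ,
    M.PosSemidef → (ampliation d 2 Φ M).PosSemidef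

theorem stmt_10 (d : ℕ)
    (Φ : Matrix (Fin d) (Fin d) ℂ →ₗ[ℂ] Matrix (Fin d) (Fin d) ℂ)
    (hunital : Φ 1 = 1) (h2 : twoPositive d Φ)
    (A : Matrix (Fin d) (Fin d) ℂ) :
    (Φ (Aᴴ * A) - Φ Aᴴ * Φ A).PosSemidef := by
  classical
  set B := Φ A with hB
  set Bd := Φ Aᴴ with hBdd
  set C := Φ (Aᴴ * A) with hC
  set X : Matrix (Fin 2 × Fin d) (Fin 2 × Fin d) ℂ :=
    Matrix.of fun p q => if p.1 = 0 then
      (if q.1 = 0 then (1 : Matrix (Fin d) (Fin d) ℂ) else A) p.2 q.2 else 0 with hX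
  have hMps : (Xᴴ * X).PosSemidef := posSemidef_conjTranspose_mul_self X
  set N := ampliation d 2 Φ (Xᴴ * X) with hN
  have hNps : N.PosSemidef := h2 _ hMps
  have hblk : ∀ (i j : Fin 2) (a b : Fin d),
      N (i, a) (j, b) = (![![1, B], ![Bd, C]] i j : Matrix (Fin d) (Fin d) ℂ) a b := by
    intro i j a b
    have hM : (Matrix.of fun a b => (Xᴴ * X) (i, a) (j, b))
        = (![![1, A], ![Aᴴ, Aᴴ * A]] i j : Matrix (Fin d) (Fin d) ℂ) := by
      ext a b
      simp only [Matrix.of_apply, Matrix.mul_apply, Matrix.conjTranspose_apply]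
      rw [Fintype.sum_prod_type, Fin.sum_univ_two]
      fin_cases i <;> fin_cases j <;>
        simp [hX, Matrix.one_apply, Matrix.mul_apply, Matrix.conjTranspose_apply,
          mul_comm, eq_comm]
    show Φ (Matrix.of fun a b => (Xᴴ * X) (i, a) (j, b)) a b = _
    rw [hM]
    fin_cases i <;> fin_cases j <;> simp [hB, hBdd, hC, hunital]
  have hherm := hNps.1
  have hBd' : Bd = Bᴴ := by
    ext b a
    have h := congrFun (congrFun hherm ((0 : Fin 2), a)) ((1 : Fin 2), b)
    simp only [Matrix.conjTranspose_apply] at h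
    simp only [Matrix.conjTranspose_apply]
    rw [hblk, hblk] at h
    simpa using congrArg (starRingEnd ℂ) h
  have hCh : C.IsHermitian := by
    ext a b
    have h := congrFun (congrFun hherm ((1 : Fin 2), a)) ((1 : Fin 2), b)
    simp only [Matrix.conjTranspose_apply] at h
    rw [hblk, hblk] at h
    simpa [Matrix.conjTranspose_apply] using h
  refine Matrix.PosSemidef.of_dotProduct_mulVec_nonneg ?_ ?_
  · rw [hBd']
    exact hCh.sub (posSemidef_conjTranspose_mul_self B).1
  · intro y
    set v := B *ᵥ y with hv
    set x : Fin 2 × Fin d → ℂ := fun p => if p.1 = 0 then -v p.2 else y p.2 with hx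
    have hle := hNps.dotProduct_mulVec_nonneg x
    have key : star x ⬝ᵥ N *ᵥ x = star y ⬝ᵥ (C - Bᴴ * B) *ᵥ y := by
      have step1 : star x ⬝ᵥ N *ᵥ x =
          star (-v) ⬝ᵥ ((1 : Matrix (Fin d) (Fin d) ℂ) *ᵥ (-v) + B *ᵥ y)
            + star y ⬝ᵥ (Bd *ᵥ (-v) + C *ᵥ y) := by
        simp only [dotProduct, mulVec, Fintype.sum_prod_type, Fin.sum_univ_two,
          Pi.star_apply, Pi.add_apply]
        simp only [hblk, hx]
        simp [Finset.mul_sum, mul_add, Finset.sum_add_distrib]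
      rw [step1, hBd']
      simp only [one_mulVec, ← hv, neg_add_cancel, dotProduct_zero, zero_add,
        mulVec_neg, sub_mulVec]
      rw [hv, mulVec_mulVec]
      simp only [dotProduct_add, dotProduct_neg, dotProduct_sub, sub_eq_add_neg]
      ring
    rw [hBd']
    rwa [key] at hle
end

section
/- For the qubit dynamical map Φ_t acting on M_2(ℂ) defined in the Pauli basis by fixing 1₂, σ₁, σ₂ and scaling σ₃ by e^{−2t} (i.e., Φ_t((1₂ + x₁σ₁ + x₂σ₂ + x₃σ₃)/2) = (1₂ + x₁σ₁ + x₂σ₂ + e^{−2t}x₃σ₃)/2), the Choi matrix C(t) = ∑_{i,j=0}^{3} (F_{ji}(t)/2) σ̄_i ⊗ σ_j has eigenvalues {−(1−e^{−2t})/2, (1−e^{−2t})/2, (1−e^{−2t})/2, (3+e^{−2t})/2}; in particular for every t > 0 the Choi matrix has exactly one negative eigenvalue, so Φ_t is not completely positive. -/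
open Matrix Complex Kronecker Polynomial ComplexOrder

/-- `σ₀ = 1₂` together with the three Pauli matrices. -/
noncomputable def pauli4 : Fin 4 → Matrix (Fin 2) (Fin 2) ℂ :=
  ![1, !![0, 1; 1, 0], !![0, -I; I, 0], !![1, 0; 0, -1]]

/-- The matrix of the dynamical map `Φ_t` in the normalized Pauli basis:
`diag(1, 1, 1, e^{−2t})`. -/
noncomputable def Fmap (t : ℝ) : Fin 4 → Fin 4 → ℝ :=
  fun i j => if i = j then (if i = 3 then Real.exp (-(2 * t)) else 1) else 0

/-- The Choi matrix `C(t) = ∑_{i,j} (F_{ji}(t)/2) σ̄_i ⊗ σ_j`. -/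
noncomputable def choi (t : ℝ) : Matrix (Fin 2 × Fin 2) (Fin 2 × Fin 2) ℂ :=
  ∑ i, ∑ j, ((Fmap t j i / 2 : ℝ) : ℂ) •
    ((pauli4 i).map (starRingEnd ℂ) ⊗ₖ pauli4 j)

/-- Explicit equivalence `Fin 2 × Fin 2 ≃ Fin 4`. -/
def e22 : Fin 2 × Fin 2 ≃ Fin 4 where
  toFun p := ![![0,1],![2,3]] p.1 p.2
  invFun i := ![(0,0),(0,1),(1,0),(1,1)] i
  left_inv := by decide
  right_inv := by decide

/-- The Choi matrix written out as an explicit `4 × 4` matrix. -/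
noncomputable def M4 (t : ℝ) : Matrix (Fin 4) (Fin 4) ℂ :=
  !![((1 + Real.exp (-(2*t)))/2 : ℝ), 0, 0, 1;
     0, ((1 - Real.exp (-(2*t)))/2 : ℝ), 0, 0;
     0, 0, ((1 - Real.exp (-(2*t)))/2 : ℝ), 0;
     1, 0, 0, ((1 + Real.exp (-(2*t)))/2 : ℝ)]

set_option maxHeartbeats 1000000 in
theorem key (t : ℝ) : reindex e22 e22 (choi t) = M4 t := by
  ext i j
  fin_cases i <;> fin_cases j <;>
    simp [choi, Fmap, pauli4, M4, e22, Fin.sum_univ_four, Matrix.one_apply,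
      Prod.ext_iff, vecHead, vecTail] <;> ring

set_option maxHeartbeats 1000000 in
theorem key2 (t : ℝ) : (M4 t).charpoly =
      (X - C ((-((1 - Real.exp (-(2 * t))) / 2) : ℝ) : ℂ)) *
      (X - C ((((1 - Real.exp (-(2 * t))) / 2) : ℝ) : ℂ)) ^ 2 *
      (X - C ((((3 + Real.exp (-(2 * t))) / 2) : ℝ) : ℂ)) := by
  have h : (M4 t).charmatrix =
      !![X - C (((1 + Real.exp (-(2*t)))/2 : ℝ) : ℂ), 0, 0, -1;
         0, X - C (((1 - Real.exp (-(2*t)))/2 : ℝ) : ℂ), 0, 0;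
         0, 0, X - C (((1 - Real.exp (-(2*t)))/2 : ℝ) : ℂ), 0;
         -1, 0, 0, X - C (((1 + Real.exp (-(2*t)))/2 : ℝ) : ℂ)] := by
    ext i j
    fin_cases i <;> fin_cases j <;>
      simp [charmatrix_apply, M4, Matrix.one_apply, vecHead, vecTail]
  rw [Matrix.charpoly, h]
  simp [Matrix.det_succ_row_zero, Fin.sum_univ_succ, Fin.castSucc, Fin.castAdd,
    Fin.castLE, vecHead, vecTail, Fin.succAbove]
  have hA : C (((1:ℂ)+cexp (-(2*↑t)))/2) = 1 - C (((1:ℂ)-cexp (-(2*↑t)))/2) := by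
    rw [eq_sub_iff_add_eq, ← map_add, ← map_one (C : ℂ →+* ℂ[X])]
    exact congrArg C (by ring)
  have hC : C (((3:ℂ)+cexp (-(2*↑t)))/2) = 2 - C (((1:ℂ)-cexp (-(2*↑t)))/2) := by
    rw [eq_sub_iff_add_eq, ← map_ofNat (C : ℂ →+* ℂ[X]) 2, ← map_add]
    exact congrArg C (by ring)
  rw [hA, hC]
  ring

theorem key3 (t : ℝ) (ht : 0 < t) : ¬ (choi t).PosSemidef := by
  intro hP
  have h4 : (M4 t).PosSemidef := by
    have := hP.submatrix e22.symm
    rwa [show (choi t).submatrix e22.symm e22.symm = reindex e22 e22 (choi t) from rfl,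
      key] at this
  have h5 := h4.dotProduct_mulVec_nonneg ![1, 0, 0, -1]
  have hv : star ![(1:ℂ), 0, 0, -1] ⬝ᵥ (M4 t) *ᵥ ![1, 0, 0, -1]
      = ((Real.exp (-(2*t)) - 1 : ℝ) : ℂ) := by
    simp [M4, mulVec, dotProduct, Fin.sum_univ_four]
    ring
  rw [hv] at h5
  rw [Complex.zero_le_real] at h5
  have : Real.exp (-(2*t)) < 1 := by
    rw [Real.exp_lt_one_iff]
    linarith
  linarith

theorem stmt_12 (t : ℝ) :
    (choi t).charpoly =
      (X - C ((-((1 - Real.exp (-(2 * t))) / 2) : ℝ) : ℂ)) *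
      (X - C ((((1 - Real.exp (-(2 * t))) / 2) : ℝ) : ℂ)) ^ 2 *
      (X - C ((((3 + Real.exp (-(2 * t))) / 2) : ℝ) : ℂ)) ∧
    (0 < t → ¬ (choi t).PosSemidef) := by
  constructor
  · rw [← Matrix.charpoly_reindex e22, key, key2]
  · exact key3 t
end

section
/- Let W : [0,∞) → M_d(ℝ) be continuous with, for each t, nonnegative off-diagonal entries and columns summing to zero, and let q solve q'(t) = −W(t)q(t). Then for all t ≥ 0, ‖q(t)‖_∞ ≥ ‖q(0)‖_∞ · exp(∫₀ᵗ min_{1≤i≤d} (W_{ii}(s) − ∑_{j≠i} |W_{ij}(s)|) ds) (lower Lozinskii–Dahlquist estimate for the ∞-norm). -/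
open Matrix

/-- Lower Lozinskii–Dahlquist estimate for the `∞`-norm, for the time-reversed
classical master equation `q' = −W(t) q`. The norm on `Fin d → ℝ` is the sup norm. -/
theorem stmt_15 (d : ℕ) (hd : 0 < d) (W : ℝ → Matrix (Fin d) (Fin d) ℝ)
    (hW : ∀ i j, ContinuousOn (fun t => W t i j) (Set.Ici 0))
    (hoff : ∀ t ∈ Set.Ici (0 : ℝ), ∀ i j, i ≠ j → 0 ≤ W t i j)
    (hcol : ∀ t ∈ Set.Ici (0 : ℝ), ∀ j, ∑ i, W t i j = 0)
    (q : ℝ → (Fin d → ℝ))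
    (hq : ∀ i, ∀ t ∈ Set.Ici (0 : ℝ),
      HasDerivAt (fun s => q s i) (-((W t).mulVec (q t) i)) t) :
    ∀ t ∈ Set.Ici (0 : ℝ),
      ‖q 0‖ * Real.exp (∫ s in (0 : ℝ)..t,
          Finset.univ.inf'
            (Finset.univ_nonempty_iff.mpr (Fin.pos_iff_nonempty.mp hd))
            (fun i => W s i i - ∑ j ∈ Finset.univ.erase i, |W s i j|))
        ≤ ‖q t‖ := by
  have NE : (Finset.univ : Finset (Fin d)).Nonempty :=
    Finset.univ_nonempty_iff.mpr (Fin.pos_iff_nonempty.mp hd)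
  set m : ℝ → ℝ := fun s =>
    Finset.univ.inf' NE (fun i => W s i i - ∑ j ∈ Finset.univ.erase i, |W s i j|)
    with hm_def
  have hmc : ContinuousOn m (Set.Ici 0) := by
    apply ContinuousOn.finset_inf'_apply NE
    intro i _
    exact (hW i i).sub (continuousOn_finset_sum _ fun j _ => (hW i j).abs)
  set M : ℝ → ℝ := fun x => ∫ s in (0:ℝ)..x, m s with hM_def
  set g : ℝ → ℝ := fun s => ‖q s‖ * Real.exp (-(M s)) with hg_def
  have hqc : ∀ i, ContinuousOn (fun s => q s i) (Set.Ici 0) :=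
    fun i x hx => ((hq i x hx).continuousAt).continuousWithinAt
  have hqnorm : ContinuousOn (fun s => ‖q s‖) (Set.Ici 0) :=
    (continuousOn_pi.mpr hqc).norm
  intro t ht
  have ht0 : (0:ℝ) ≤ t := ht
  show ‖q 0‖ * Real.exp (M t) ≤ ‖q t‖
  -- key slope estimate
  have key : ∀ x ∈ Set.Ico (0:ℝ) t, ∀ r : ℝ, (fun _ : ℝ => (0:ℝ)) x < r →
      ∃ᶠ z in nhdsWithin x (Set.Ioi x), slope (fun s => -(g s)) x z < r := by
    intro x hx r hr
    have hr' : (0:ℝ) < r := hr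
    have hx0 : x ∈ Set.Ici (0:ℝ) := hx.1
    rcases eq_or_lt_of_le (norm_nonneg (q x)) with hz0 | hpos
    · -- ‖q x‖ = 0
      apply Filter.Eventually.frequently
      filter_upwards [self_mem_nhdsWithin] with z hzx
      have hgx : g x = 0 := by simp [hg_def, ← hz0]
      have hgz : 0 ≤ g z := mul_nonneg (norm_nonneg _) (Real.exp_pos _).le
      rw [slope_def_field]
      have hzx' : (0:ℝ) < z - x := sub_pos.mpr hzx
      have : (-(g z) - -(g x)) / (z - x) ≤ 0 := by
        apply div_nonpos_of_nonpos_of_nonneg <;> [linarith; linarith]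
      linarith
    · -- ‖q x‖ > 0
      obtain ⟨i, -, hmax⟩ :=
        Finset.exists_max_image (Finset.univ : Finset (Fin d)) (fun j => |q x j|) NE
      have hnorm_eq : ‖q x‖ = |q x i| := by
        refine le_antisymm ?_ ?_
        · rw [pi_norm_le_iff_of_nonneg (abs_nonneg _)]
          intro j; rw [Real.norm_eq_abs]; exact hmax j (Finset.mem_univ j)
        · rw [← Real.norm_eq_abs]; exact norm_le_pi_norm _ i
      have hne : q x i ≠ 0 := by
        intro h0
        rw [hnorm_eq, h0, abs_zero] at hpos
        exact lt_irrefl _ hpos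
      -- derivative of |q · i|
      obtain ⟨σ, hσabs, hσq, hσA⟩ : ∃ σ : ℝ, |σ| = 1 ∧ σ * q x i = |q x i| ∧
          HasDerivAt (fun s => |q s i|) (σ * (-((W x).mulVec (q x) i))) x := by
        rcases hne.lt_or_gt with hlt | hlt
        · refine ⟨-1, by norm_num, by rw [abs_of_neg hlt]; ring, ?_⟩
          have := (hasDerivAt_abs_neg hlt).comp x (hq i x hx0)
          simpa [Function.comp_def] using this
        · refine ⟨1, by norm_num, by rw [abs_of_pos hlt]; ring, ?_⟩
          have := (hasDerivAt_abs_pos hlt).comp x (hq i x hx0)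
          simpa [Function.comp_def] using this
      -- derivative of M from the right
      have hsubIci : Set.Ici x ⊆ Set.Ici (0:ℝ) := Set.Ici_subset_Ici.mpr hx.1
      have hsubIoi : Set.Ioi x ⊆ Set.Ici (0:ℝ) := fun z hz => le_trans hx.1 (le_of_lt hz)
      have hint : IntervalIntegrable m MeasureTheory.volume 0 x := by
        apply ContinuousOn.intervalIntegrable
        rw [Set.uIcc_of_le hx.1]
        exact hmc.mono Set.Icc_subset_Ici_self
      have hmeas : StronglyMeasurableAtFilter m (nhdsWithin x (Set.Ioi x))
          MeasureTheory.volume :=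
        (hmc.stronglyMeasurableAtFilter_nhdsWithin measurableSet_Ici x).filter_mono
          (nhdsWithin_mono x hsubIoi)
      have hMd : HasDerivWithinAt M (m x) (Set.Ici x) x :=
        intervalIntegral.integral_hasDerivWithinAt_right hint hmeas
          ((hmc x hx0).mono hsubIoi)
      have hE : HasDerivWithinAt (fun s => Real.exp (-(M s)))
          (Real.exp (-(M x)) * -(m x)) (Set.Ici x) x := hMd.neg.exp
      set D : ℝ := σ * (-((W x).mulVec (q x) i)) * Real.exp (-(M x)) +
        |q x i| * (Real.exp (-(M x)) * -(m x)) with hD_def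
      have hh : HasDerivWithinAt (fun s => |q s i| * Real.exp (-(M s))) D
          (Set.Ici x) x := hσA.hasDerivWithinAt.mul hE
      -- D ≥ 0
      have hWii : W x i i ≤ 0 := by
        have h0 := hcol x hx0 i
        rw [← Finset.add_sum_erase _ _ (Finset.mem_univ i)] at h0
        have hnn : 0 ≤ ∑ k ∈ Finset.univ.erase i, W x k i :=
          Finset.sum_nonneg fun k hk => hoff x hx0 k i (Finset.ne_of_mem_erase hk)
        linarith
      have hmv_eq : (W x).mulVec (q x) i =
          W x i i * q x i + ∑ j ∈ Finset.univ.erase i, W x i j * q x j := by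
        rw [Matrix.mulVec, dotProduct]
        exact (Finset.add_sum_erase _ _ (Finset.mem_univ i)).symm
      have hsum_le : ∑ j ∈ Finset.univ.erase i, σ * (W x i j * q x j) ≤
          (∑ j ∈ Finset.univ.erase i, W x i j) * |q x i| := by
        rw [Finset.sum_mul]
        apply Finset.sum_le_sum
        intro j hj
        have hWj : 0 ≤ W x i j := hoff x hx0 i j (Finset.ne_of_mem_erase hj).symm
        calc σ * (W x i j * q x j) ≤ |σ * (W x i j * q x j)| := le_abs_self _
          _ = W x i j * |q x j| := by
              rw [abs_mul, hσabs, one_mul, abs_mul, abs_of_nonneg hWj]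
          _ ≤ W x i j * |q x i| :=
              mul_le_mul_of_nonneg_left (hmax j (Finset.mem_univ j)) hWj
      have habs : ∑ j ∈ Finset.univ.erase i, |W x i j| =
          ∑ j ∈ Finset.univ.erase i, W x i j :=
        Finset.sum_congr rfl fun j hj =>
          abs_of_nonneg (hoff x hx0 i j (Finset.ne_of_mem_erase hj).symm)
      have hexp : σ * (-((W x).mulVec (q x) i)) =
          -(W x i i * |q x i|) - ∑ j ∈ Finset.univ.erase i, σ * (W x i j * q x j) := by
        rw [hmv_eq, ← hσq, ← Finset.mul_sum]; ring
      have hkey2 : m x * |q x i| ≤ σ * (-((W x).mulVec (q x) i)) := by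
        have h1 : m x ≤ W x i i - ∑ j ∈ Finset.univ.erase i, |W x i j| :=
          Finset.inf'_le _ (Finset.mem_univ i)
        rw [habs] at h1
        have habs0 : (0:ℝ) ≤ |q x i| := abs_nonneg _
        have h2 : m x * |q x i| ≤
            (W x i i - ∑ j ∈ Finset.univ.erase i, W x i j) * |q x i| :=
          mul_le_mul_of_nonneg_right h1 habs0
        have h3 : (W x i i - ∑ j ∈ Finset.univ.erase i, W x i j) * |q x i| ≤
            (-(W x i i) - ∑ j ∈ Finset.univ.erase i, W x i j) * |q x i| := by
          apply mul_le_mul_of_nonneg_right _ habs0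
          linarith
        rw [hexp]
        have h4 : (-(W x i i) - ∑ j ∈ Finset.univ.erase i, W x i j) * |q x i| ≤
            -(W x i i * |q x i|) - ∑ j ∈ Finset.univ.erase i, σ * (W x i j * q x j) := by
          rw [sub_mul, neg_mul]
          linarith [hsum_le]
        linarith
      have hD0 : 0 ≤ D := by
        rw [hD_def]
        have hEpos : (0:ℝ) < Real.exp (-(M x)) := Real.exp_pos _
        nlinarith [hkey2, hEpos]
      -- conclude frequently
      have tends : Filter.Tendsto (slope (fun s => |q s i| * Real.exp (-(M s))) x)
          (nhdsWithin x (Set.Ioi x)) (nhds D) :=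
        (hasDerivWithinAt_iff_tendsto_slope' (lt_irrefl x)).1 hh.Ioi_of_Ici
      apply Filter.Eventually.frequently
      have hev : ∀ᶠ z in nhdsWithin x (Set.Ioi x),
          slope (fun s => |q s i| * Real.exp (-(M s))) x z ∈ Set.Ioi (-r) :=
        tends (Ioi_mem_nhds (by linarith))
      filter_upwards [hev, self_mem_nhdsWithin] with z hzslope hzx
      have hzx' : (0:ℝ) < z - x := sub_pos.mpr hzx
      have hle : |q z i| * Real.exp (-(M z)) ≤ g z :=
        mul_le_mul_of_nonneg_right
          (by rw [← Real.norm_eq_abs]; exact norm_le_pi_norm _ i) (Real.exp_pos _).le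
      have heq : |q x i| * Real.exp (-(M x)) = g x := by
        show _ = ‖q x‖ * Real.exp (-(M x)); rw [hnorm_eq]
      have hgh : slope (fun s => |q s i| * Real.exp (-(M s))) x z ≤ slope g x z := by
        rw [slope_def_field, slope_def_field, heq]
        rw [div_le_div_iff_of_pos_right hzx']
        linarith
      have hsl : slope (fun s => -(g s)) x z = -(slope g x z) := by
        rw [slope_def_field, slope_def_field]; ring
      rw [hsl]
      have : -r < slope g x z := lt_of_lt_of_le hzslope hgh
      linarith
  -- continuity of g on [0, t]
  have hIcc : Set.Icc (0:ℝ) t ⊆ Set.Ici 0 := Set.Icc_subset_Ici_self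
  have hMc : ContinuousOn M (Set.Icc 0 t) := by
    have hint : MeasureTheory.IntegrableOn m (Set.uIcc 0 t) MeasureTheory.volume := by
      rw [Set.uIcc_of_le ht0]
      exact (hmc.mono hIcc).integrableOn_compact isCompact_Icc
    have := intervalIntegral.continuousOn_primitive_interval hint
    rwa [Set.uIcc_of_le ht0] at this
  have hgc : ContinuousOn g (Set.Icc 0 t) :=
    (hqnorm.mono hIcc).mul (Real.continuous_exp.comp_continuousOn hMc.neg)
  -- fencing
  have main : ∀ ε : ℝ, 0 < ε → -(g t) ≤ -(g 0) + ε * t := by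
    intro ε hε
    have hB : ∀ y : ℝ, HasDerivAt (fun s => -(g 0) + ε * s) ε y := by
      intro y
      simpa using ((hasDerivAt_id y).const_mul ε).const_add (-(g 0))
    have happ := image_le_of_liminf_slope_right_lt_deriv_boundary
      (f := fun s => -(g s)) (f' := fun _ => (0:ℝ)) hgc.neg key
      (B := fun s => -(g 0) + ε * s) (B' := fun _ => ε) (by simp) hB
      (fun y hy _ => hε) (Set.right_mem_Icc.mpr ht0)
    simpa using happ
  have hg0t : g 0 ≤ g t := by
    apply le_of_forall_pos_le_add
    intro δ hδ
    have hεpos : (0:ℝ) < δ / (t + 1) := by positivity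
    have h2 := main _ hεpos
    have h3 : δ / (t + 1) * t ≤ δ := by
      rw [div_mul_eq_mul_div, div_le_iff₀ (by linarith : (0:ℝ) < t + 1)]
      nlinarith
    linarith
  have hM0 : M 0 = 0 := intervalIntegral.integral_same
  have hg0 : g 0 = ‖q 0‖ := by
    rw [hg_def]; simp [hM0]
  calc ‖q 0‖ * Real.exp (M t) = g 0 * Real.exp (M t) := by rw [hg0]
    _ ≤ g t * Real.exp (M t) := mul_le_mul_of_nonneg_right hg0t (Real.exp_pos _).le
    _ = ‖q t‖ := by
        rw [hg_def, mul_assoc, ← Real.exp_add, neg_add_cancel, Real.exp_zero, mul_one]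
end
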